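/- Let C_n be the cycle graph on n ≥ 3 vertices with n ≡ 0 or 2 (mod 3). Then the independence complex Δ_{C_n} of C_n is vertex dismissible. -/

import Mathlib

/-- A simplicial complex: a collection of finite sets closed under taking subsets. -/
def IsComplex {α : Type*} (Δ : Set (Finset α)) : Prop :=
  ∀ F ∈ Δ, ∀ G : Finset α, G ⊆ F → G ∈ Δ

/-- A facet: a maximal face of `Δ`. -/
def IsFacet {α : Type*} (Δ : Set (Finset α)) (F : Finset α) : Prop :=
  F ∈ Δ ∧ ∀ G ∈ Δ, F ⊆ G → G = F

/-- The initial dimension `mdim Δ`: the minimum dimension (= card − 1) of a facet of `Δ`. -/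
noncomputable def mdim {α : Type*} (Δ : Set (Finset α)) : ℤ :=
  ((sInf {n : ℕ | ∃ F, IsFacet Δ F ∧ F.card = n} : ℕ) : ℤ) - 1

/-- The dimension `dimc Δ`: the maximum dimension (= card − 1) of a face of `Δ`. -/
noncomputable def dimc {α : Type*} (Δ : Set (Finset α)) : ℤ :=
  ((sSup {n : ℕ | ∃ F ∈ Δ, F.card = n} : ℕ) : ℤ) - 1

/-- A complex is pure if its initial dimension equals its dimension. -/
def IsPure {α : Type*} (Δ : Set (Finset α)) : Prop := mdim Δ = dimc Δ

/-- Deletion of a vertex: `del_Δ(x) = {F ∈ Δ : x ∉ F}`. -/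
def del {α : Type*} (Δ : Set (Finset α)) (x : α) : Set (Finset α) :=
  {F ∈ Δ | x ∉ F}

/-- Link of a vertex: `link_Δ(x) = {F \ {x} : x ∈ F ∈ Δ}`. -/
def link {α : Type*} [DecidableEq α] (Δ : Set (Finset α)) (x : α) : Set (Finset α) :=
  {G | ∃ F ∈ Δ, x ∈ F ∧ G = F \ {x}}

/-- A shedding vertex: every facet containing `x` is covered by a facet avoiding `x`. -/
def IsShedding {α : Type*} [DecidableEq α] (Δ : Set (Finset α)) (x : α) : Prop :=
  ∀ F, IsFacet Δ F → x ∈ F → ∃ F', IsFacet Δ F' ∧ x ∉ F' ∧ F \ {x} ⊆ F'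

/-- A dismissing vertex: `mdim del_Δ(x) ≥ mdim Δ`. -/
def IsDismissing {α : Type*} (Δ : Set (Finset α)) (x : α) : Prop :=
  mdim Δ ≤ mdim (del Δ x)

/-- A simplex: the collection of all subsets of a finite set (possibly empty). -/
def IsSimplexSet {α : Type*} (Δ : Set (Finset α)) : Prop :=
  ∃ F : Finset α, Δ = {G : Finset α | G ⊆ F}

/-- The pure `k`-skeleton: all faces contained in some `k`-dimensional face of `Δ`. -/
def pureSkeleton {α : Type*} (Δ : Set (Finset α)) (k : ℤ) : Set (Finset α) :=
  {F | ∃ G ∈ Δ, F ⊆ G ∧ (G.card : ℤ) = k + 1}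

/-- Vertex decomposable complexes. -/
inductive VertexDecomposable {α : Type*} [DecidableEq α] : Set (Finset α) → Prop
  | simplex {Δ : Set (Finset α)} : IsSimplexSet Δ → VertexDecomposable Δ
  | shed {Δ : Set (Finset α)} (x : α) : IsShedding Δ x →
      VertexDecomposable (del Δ x) → VertexDecomposable (link Δ x) →
      VertexDecomposable Δ

/-- Vertex dismissible complexes. -/
inductive VertexDismissible {α : Type*} [DecidableEq α] : Set (Finset α) → Prop
  | simplex {Δ : Set (Finset α)} : IsSimplexSet Δ → VertexDismissible Δ
  | dismiss {Δ : Set (Finset α)} (x : α) : IsDismissing Δ x →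
      VertexDismissible (del Δ x) → VertexDismissible (link Δ x) →
      VertexDismissible Δ

/-- `⟨F⟩`: the simplex on the finite set `F`. -/
def faceSimplex {α : Type*} (F : Finset α) : Set (Finset α) := {G : Finset α | G ⊆ F}

/-- A shelling order: an ordering `F_0, …, F_{q-1}` of the facets of `Δ` such that for `j ≥ 1`
the complex `⟨F_j⟩ ∩ ⋃_{i<j} ⟨F_i⟩` is pure of dimension `dim F_j − 1`. -/
def IsShellingOrder {α : Type*} (Δ : Set (Finset α)) {q : ℕ} (F : Fin q → Finset α) : Prop :=
  Function.Injective F ∧ (∀ G, IsFacet Δ G ↔ ∃ i, F i = G) ∧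
  ∀ j : Fin q, 0 < (j : ℕ) → ∀ G,
    IsFacet (faceSimplex (F j) ∩ ⋃ (i : Fin q) (_ : i < j), faceSimplex (F i)) G →
    (G.card : ℤ) = (F j).card - 1

/-- A complex is shellable if its facets admit a shelling order. -/
def Shellable {α : Type*} (Δ : Set (Finset α)) : Prop :=
  ∃ (q : ℕ) (F : Fin q → Finset α), IsShellingOrder Δ F

/-- A scaling order: an ordering `F_0, …, F_{q-1}` of the facets of `Δ` such that for `j ≥ 1`
the complex `Δ_j = ⟨F_j⟩ ∩ ⋃_{i<j} ⟨F_i⟩` satisfies `mdim Δ_j ≥ mdim Δ − 1`. -/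
def IsScalingOrder {α : Type*} (Δ : Set (Finset α)) {q : ℕ} (F : Fin q → Finset α) : Prop :=
  Function.Injective F ∧ (∀ G, IsFacet Δ G ↔ ∃ i, F i = G) ∧
  ∀ j : Fin q, 0 < (j : ℕ) →
    mdim Δ - 1 ≤ mdim (faceSimplex (F j) ∩ ⋃ (i : Fin q) (_ : i < j), faceSimplex (F i))

/-- A complex is scalable if its facets admit a scaling order. -/
def Scalable {α : Type*} (Δ : Set (Finset α)) : Prop :=
  ∃ (q : ℕ) (F : Fin q → Finset α), IsScalingOrder Δ F

section Generic
set_option linter.unusedSectionVars false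
open Finset

variable {α : Type*} [DecidableEq α] [Fintype α]

lemma vd_empty_mem {Δ : Set (Finset α)} (h : VertexDismissible Δ) : (∅ : Finset α) ∈ Δ := by
  induction h with
  | simplex h => obtain ⟨F, rfl⟩ := h; exact Finset.empty_subset F
  | dismiss x hx hdel hlink ihdel ihlink => exact ihdel.1

lemma exists_facet {Δ : Set (Finset α)} (h : Δ.Nonempty) : ∃ F, IsFacet Δ F := by
  obtain ⟨F, hF, hmax⟩ := Set.Finite.exists_maximalFor Finset.card Δ (Set.toFinite Δ) h
  exact ⟨F, hF, fun G hG hFG =>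
    (Finset.eq_of_subset_of_card_le hFG (hmax hG (Finset.card_le_card hFG))).symm⟩

lemma isDismissing_of {Δ : Set (Finset α)} {x : α} {k : ℕ}
    (h1 : ∃ F, IsFacet Δ F ∧ F.card ≤ k)
    (h2 : ∃ F, IsFacet (del Δ x) F)
    (h3 : ∀ F, IsFacet (del Δ x) F → k ≤ F.card) : IsDismissing Δ x := by
  obtain ⟨F, hF, hFk⟩ := h1
  obtain ⟨F', hF'⟩ := h2
  unfold IsDismissing mdim
  have hA : sInf {c : ℕ | ∃ F, IsFacet Δ F ∧ F.card = c} ≤ k :=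
    le_trans (Nat.sInf_le ⟨F, hF, rfl⟩) hFk
  have hBne : {c : ℕ | ∃ F, IsFacet (del Δ x) F ∧ F.card = c}.Nonempty := ⟨F'.card, F', hF', rfl⟩
  obtain ⟨G, hG, hGc⟩ := Nat.sInf_mem hBne
  have hB : k ≤ sInf {c : ℕ | ∃ F, IsFacet (del Δ x) F ∧ F.card = c} := hGc ▸ h3 G hG
  omega

/-- cone over a complex -/
def cone (v : α) (Δ : Set (Finset α)) : Set (Finset α) := {F | F \ {v} ∈ Δ}

lemma facet_cone_iff {v : α} {Δ : Set (Finset α)} (hv : ∀ G ∈ Δ, v ∉ G) (F : Finset α) :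
    IsFacet (cone v Δ) F ↔ ∃ F', IsFacet Δ F' ∧ F = insert v F' := by
  constructor
  · rintro ⟨hF, hmax⟩
    have hvF : v ∈ F := by
      by_contra hvn
      have hFΔ : F ∈ Δ := by
        have h' : F \ {v} ∈ Δ := hF
        rwa [Finset.sdiff_singleton_eq_erase, Finset.erase_eq_of_notMem hvn] at h'
      have h1 : insert v F ∈ cone v Δ := by
        show insert v F \ {v} ∈ Δ
        rw [Finset.sdiff_singleton_eq_erase, Finset.erase_insert hvn]
        exact hFΔ
      have := hmax _ h1 (Finset.subset_insert v F)
      exact hvn (this ▸ Finset.mem_insert_self v F)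
    refine ⟨F \ {v}, ⟨hF, ?_⟩, ?_⟩
    · intro G hG hFG
      have hvG : v ∉ G := hv G hG
      have h1 : insert v G ∈ cone v Δ := by
        show insert v G \ {v} ∈ Δ
        rwa [Finset.sdiff_singleton_eq_erase, Finset.erase_insert hvG]
      have h2 : F ⊆ insert v G := by
        intro a ha
        rcases eq_or_ne a v with rfl | hav
        · exact Finset.mem_insert_self _ _
        · exact Finset.mem_insert_of_mem (hFG (Finset.mem_sdiff.2 ⟨ha, by simpa using hav⟩))
      have h3 := hmax _ h1 h2
      rw [← h3, Finset.sdiff_singleton_eq_erase, Finset.erase_insert hvG]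
    · rw [Finset.sdiff_singleton_eq_erase, Finset.insert_erase hvF]
  · rintro ⟨F', ⟨hF', hmax⟩, rfl⟩
    have hvF' : v ∉ F' := hv F' hF'
    constructor
    · show insert v F' \ {v} ∈ Δ
      rwa [Finset.sdiff_singleton_eq_erase, Finset.erase_insert hvF']
    · intro H hH hFH
      have h1 : F' ⊆ H \ {v} := by
        intro a ha
        exact Finset.mem_sdiff.2 ⟨hFH (Finset.mem_insert_of_mem ha), by
          simp only [Finset.mem_singleton]; rintro rfl; exact hvF' ha⟩
      have h2 : H \ {v} = F' := hmax _ hH h1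
      apply Finset.Subset.antisymm _ hFH
      intro a ha
      rcases eq_or_ne a v with rfl | hav
      · exact Finset.mem_insert_self _ _
      · exact Finset.mem_insert_of_mem (h2 ▸ Finset.mem_sdiff.2 ⟨ha, by simpa using hav⟩)

lemma mdim_cone {v : α} {Δ : Set (Finset α)} (hv : ∀ G ∈ Δ, v ∉ G) (hne : ∃ F, IsFacet Δ F) :
    mdim (cone v Δ) = mdim Δ + 1 := by
  obtain ⟨F, hF⟩ := hne
  have hAne : {c : ℕ | ∃ F, IsFacet Δ F ∧ F.card = c}.Nonempty := ⟨F.card, F, hF, rfl⟩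
  obtain ⟨F₀, hF₀, hF₀c⟩ := Nat.sInf_mem hAne
  have hup : sInf {c : ℕ | ∃ F, IsFacet (cone v Δ) F ∧ F.card = c} ≤
      sInf {c : ℕ | ∃ F, IsFacet Δ F ∧ F.card = c} + 1 := by
    apply Nat.sInf_le
    refine ⟨insert v F₀, (facet_cone_iff hv _).2 ⟨F₀, hF₀, rfl⟩, ?_⟩
    rw [Finset.card_insert_of_notMem (hv F₀ hF₀.1), hF₀c]
  have hBne : {c : ℕ | ∃ F, IsFacet (cone v Δ) F ∧ F.card = c}.Nonempty :=
    ⟨(insert v F₀).card, insert v F₀, (facet_cone_iff hv _).2 ⟨F₀, hF₀, rfl⟩, rfl⟩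
  obtain ⟨G, hG, hGc⟩ := Nat.sInf_mem hBne
  obtain ⟨G', hG', rfl⟩ := (facet_cone_iff hv _).1 hG
  have hlow : sInf {c : ℕ | ∃ F, IsFacet Δ F ∧ F.card = c} + 1 ≤
      sInf {c : ℕ | ∃ F, IsFacet (cone v Δ) F ∧ F.card = c} := by
    rw [← hGc, Finset.card_insert_of_notMem (hv G' hG'.1)]
    have hmem : G'.card ∈ {c : ℕ | ∃ F, IsFacet Δ F ∧ F.card = c} := ⟨G', hG', rfl⟩
    have := Nat.sInf_le hmem
    omega
  unfold mdim
  omega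

lemma del_cone {v x : α} (hxv : x ≠ v) (Δ : Set (Finset α)) :
    del (cone v Δ) x = cone v (del Δ x) := by
  ext F
  simp only [del, cone, Set.mem_setOf_eq, Set.mem_sep_iff, Finset.mem_sdiff,
    Finset.mem_singleton]
  constructor
  · rintro ⟨h1, h2⟩; exact ⟨h1, fun h => h2 h.1⟩
  · rintro ⟨h1, h2⟩; exact ⟨h1, fun h => h2 ⟨h, hxv⟩⟩

lemma link_cone {v x : α} (hxv : x ≠ v) (Δ : Set (Finset α)) :
    link (cone v Δ) x = cone v (link Δ x) := by
  ext G
  simp only [link, cone, Set.mem_setOf_eq]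
  constructor
  · rintro ⟨F, hF, hxF, rfl⟩
    refine ⟨F \ {v}, hF, Finset.mem_sdiff.2 ⟨hxF, by simpa using hxv⟩, ?_⟩
    ext a; simp only [Finset.mem_sdiff, Finset.mem_singleton]; tauto
  · rintro ⟨F', hF', hxF', hG⟩
    have hxG : x ∉ G \ {v} := by rw [hG]; simp
    have hxG2 : x ∉ G := fun h => hxG (Finset.mem_sdiff.2 ⟨h, by simpa using hxv⟩)
    refine ⟨insert x G, ?_, Finset.mem_insert_self _ _, by
      rw [Finset.sdiff_singleton_eq_erase, Finset.erase_insert hxG2]⟩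
    show insert x G \ {v} ∈ Δ
    have : insert x G \ {v} = insert x (G \ {v}) := by
      ext a
      simp only [Finset.mem_sdiff, Finset.mem_insert, Finset.mem_singleton]
      constructor
      · rintro ⟨h1 | h1, h2⟩
        · exact Or.inl h1
        · exact Or.inr ⟨h1, h2⟩
      · rintro (rfl | ⟨h1, h2⟩)
        · exact ⟨Or.inl rfl, hxv⟩
        · exact ⟨Or.inr h1, h2⟩
    rw [this, hG, Finset.sdiff_singleton_eq_erase, Finset.insert_erase hxF']
    exact hF'

lemma cone_vd {Δ : Set (Finset α)} (h : VertexDismissible Δ) :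
    ∀ v : α, (∀ G ∈ Δ, v ∉ G) → VertexDismissible (cone v Δ) := by
  induction h with
  | @simplex Δ h =>
    intro v hv
    obtain ⟨F, rfl⟩ := h
    refine .simplex ⟨insert v F, ?_⟩
    ext G
    simp only [cone, Set.mem_setOf_eq, Finset.sdiff_singleton_eq_erase,
      ← Finset.subset_insert_iff]
  | @dismiss Δ x hx hdel hlink ihdel ihlink =>
    intro v hv
    have hxv : x ≠ v := by
      obtain ⟨F, hF, hxF, -⟩ := vd_empty_mem hlink
      rintro rfl; exact hv F hF hxF
    have hvdel : ∀ G ∈ del Δ x, v ∉ G := fun G hG => hv G hG.1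
    have hvlink : ∀ G ∈ link Δ x, v ∉ G := by
      rintro G ⟨F, hF, hxF, rfl⟩ hvG
      exact hv F hF (Finset.mem_sdiff.1 hvG).1
    refine .dismiss x ?_ ?_ ?_
    · have hfΔ : ∃ F, IsFacet Δ F := exists_facet ⟨∅, (vd_empty_mem hdel).1⟩
      have hfdel : ∃ F, IsFacet (del Δ x) F := exists_facet ⟨∅, vd_empty_mem hdel⟩
      unfold IsDismissing
      rw [del_cone hxv, mdim_cone hv hfΔ, mdim_cone hvdel hfdel]
      have := hx
      unfold IsDismissing at this
      omega
    · rw [del_cone hxv]; exact ihdel v hvdel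
    · rw [link_cone hxv]; exact ihlink v hvlink

end Generic
section Cycle
set_option linter.unusedSectionVars false
open Finset SimpleGraph Fin.NatCast

variable {n : ℕ}

/-- independent sets of the cycle graph contained in `S` -/
def KK (n : ℕ) (S : Finset (Fin n)) : Set (Finset (Fin n)) :=
  {F | F ⊆ S ∧ ∀ i ∈ F, ∀ j ∈ F, ¬ (cycleGraph n).Adj i j}

/-- closed neighborhood -/
def NB (n : ℕ) (u : Fin n) : Finset (Fin n) :=
  Finset.univ.filter (fun v => v = u ∨ (cycleGraph n).Adj u v)

/-- the arc of vertices with values in `[a, a+m)` -/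
def arc (n a m : ℕ) : Finset (Fin n) :=
  Finset.univ.filter (fun v => a ≤ v.val ∧ v.val < a + m)

lemma mem_arc {a m : ℕ} {v : Fin n} : v ∈ arc n a m ↔ a ≤ v.val ∧ v.val < a + m := by
  simp [arc]

lemma adj_iff (hn : 3 ≤ n) {u v : Fin n} :
    (cycleGraph n).Adj u v ↔
      (v.val = u.val + 1 ∨ u.val = v.val + 1 ∨ (u.val = 0 ∧ v.val = n - 1) ∨
        (v.val = 0 ∧ u.val = n - 1)) := by
  have key : ∀ a b : ℕ, a < n → b < n → (((n - b) + a) % n = 1 ↔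
      (a = b + 1 ∨ (b = n - 1 ∧ a = 0))) := by
    intro a b ha hb
    rcases Nat.lt_or_ge ((n - b) + a) n with h | h
    · rw [Nat.mod_eq_of_lt h]; omega
    · rw [Nat.mod_eq_sub_mod h, Nat.mod_eq_of_lt (by omega)]; omega
  rw [cycleGraph_adj', Fin.sub_def, Fin.sub_def]
  simp only []
  rw [key u.val v.val u.isLt v.isLt, key v.val u.val v.isLt u.isLt]
  omega

lemma mem_NB {u v : Fin n} : v ∈ NB n u ↔ v = u ∨ (cycleGraph n).Adj u v := by
  simp [NB]

lemma card_NB_le (hn : 3 ≤ n) (u : Fin n) : (NB n u).card ≤ 3 := by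
  have h1 : (u.val + 1) % n < n := Nat.mod_lt _ (by omega)
  have h2 : (u.val + n - 1) % n < n := Nat.mod_lt _ (by omega)
  have hsub : NB n u ⊆ {u, ⟨(u.val + 1) % n, h1⟩, ⟨(u.val + n - 1) % n, h2⟩} := by
    intro v hv
    rcases mem_NB.1 hv with rfl | hadj
    · simp
    · have hu := u.isLt; have hvlt := v.isLt
      rcases (adj_iff hn).1 hadj with h | h | ⟨h, h'⟩ | ⟨h, h'⟩
      · have : v = ⟨(u.val + 1) % n, h1⟩ := by
          apply Fin.ext; simp only []; rw [Nat.mod_eq_of_lt (by omega)]; omega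
        simp [this]
      · have : v = ⟨(u.val + n - 1) % n, h2⟩ := by
          apply Fin.ext; simp only []
          rw [Nat.mod_eq_sub_mod (by omega), Nat.mod_eq_of_lt (by omega)]; omega
        simp [this]
      · have : v = ⟨(u.val + n - 1) % n, h2⟩ := by
          apply Fin.ext; simp only []
          rw [Nat.mod_eq_of_lt (by omega)]; omega
        simp [this]
      · have : v = ⟨(u.val + 1) % n, h1⟩ := by
          apply Fin.ext; simp only []
          rw [Nat.mod_eq_sub_mod (by omega), Nat.mod_eq_of_lt (by omega)]; omega
        simp [this]
  calc (NB n u).card ≤ _ := Finset.card_le_card hsub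
    _ ≤ 3 := by
      apply le_trans (Finset.card_insert_le _ _)
      apply Nat.succ_le_succ
      apply le_trans (Finset.card_insert_le _ _)
      simp

lemma insert_indep {F : Finset (Fin n)} {v : Fin n}
    (hF : ∀ i ∈ F, ∀ j ∈ F, ¬ (cycleGraph n).Adj i j)
    (hv : ∀ u ∈ F, ¬ (cycleGraph n).Adj u v) :
    ∀ i ∈ insert v F, ∀ j ∈ insert v F, ¬ (cycleGraph n).Adj i j := by
  intro i hi j hj hadj
  rcases Finset.mem_insert.1 hi with h1 | h1 <;> rcases Finset.mem_insert.1 hj with h2 | h2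
  · exact (cycleGraph n).irrefl (h1 ▸ h2 ▸ hadj)
  · exact hv j h2 ((by rwa [h1] at hadj : (cycleGraph n).Adj v j)).symm
  · exact hv i h1 (by rwa [h2] at hadj)
  · exact hF i h1 j h2 hadj

lemma empty_mem_KK {S : Finset (Fin n)} : (∅ : Finset (Fin n)) ∈ KK n S :=
  ⟨Finset.empty_subset _, by simp⟩

lemma facet_of_cover {S T : Finset (Fin n)} (hT : T ∈ KK n S)
    (hcov : S ⊆ T.biUnion (NB n)) : IsFacet (KK n S) T := by
  refine ⟨hT, fun G hG hTG => ?_⟩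
  refine Finset.Subset.antisymm ?_ hTG
  intro g hg
  obtain ⟨u, hu, hgu⟩ := Finset.mem_biUnion.1 (hcov (hG.1 hg))
  rcases mem_NB.1 hgu with rfl | hadj
  · exact hu
  · exact absurd hadj (hG.2 u (hTG hu) g hg)

lemma facet_card_lb (hn : 3 ≤ n) {S F : Finset (Fin n)} (hF : IsFacet (KK n S) F) :
    S.card ≤ 3 * F.card := by
  have hcov : S ⊆ F.biUnion (NB n) := by
    intro v hv
    by_contra hvn
    have hnb : ∀ u ∈ F, ¬(v = u ∨ (cycleGraph n).Adj u v) := by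
      intro u hu h
      exact hvn (Finset.mem_biUnion.2 ⟨u, hu, mem_NB.2 h⟩)
    have hvF : v ∉ F := fun h => (hnb v h) (Or.inl rfl)
    have hins : insert v F ∈ KK n S := by
      refine ⟨Finset.insert_subset hv hF.1.1, ?_⟩
      exact insert_indep hF.1.2 (fun u hu hadj => (hnb u hu) (Or.inr hadj))
    have := hF.2 _ hins (Finset.subset_insert _ _)
    exact hvF (this ▸ Finset.mem_insert_self v F)
  calc S.card ≤ (F.biUnion (NB n)).card := Finset.card_le_card hcov
    _ ≤ ∑ u ∈ F, (NB n u).card := Finset.card_biUnion_le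
    _ ≤ ∑ _u ∈ F, 3 := Finset.sum_le_sum (fun u _ => card_NB_le hn u)
    _ = 3 * F.card := by rw [Finset.sum_const, smul_eq_mul, Nat.mul_comm]

lemma card_arc {a m : ℕ} (h : a + m ≤ n) : (arc n a m).card = m := by
  have hb : ∀ k ∈ Finset.Ico a (a + m), k < n := fun k hk =>
    lt_of_lt_of_le (Finset.mem_Ico.1 hk).2 h
  have : arc n a m = (Finset.Ico a (a + m)).attachFin hb := by
    ext v
    rw [mem_arc, Finset.mem_attachFin, Finset.mem_Ico]
  rw [this, Finset.card_attachFin, Nat.card_Ico]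
  omega

lemma del_KK {S : Finset (Fin n)} {x : Fin n} : del (KK n S) x = KK n (S.erase x) := by
  ext F
  simp only [del, KK, Set.mem_setOf_eq, Set.mem_sep_iff, Finset.subset_erase]
  tauto

lemma link_KK {S : Finset (Fin n)} {x : Fin n} (hx : x ∈ S) :
    link (KK n S) x = KK n (S \ NB n x) := by
  ext G
  simp only [link, KK, Set.mem_setOf_eq]
  constructor
  · rintro ⟨F, ⟨hFS, hind⟩, hxF, rfl⟩
    constructor
    · intro g hg
      obtain ⟨hgF, hgx⟩ := Finset.mem_sdiff.1 hg
      refine Finset.mem_sdiff.2 ⟨hFS hgF, fun hgnb => ?_⟩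
      rcases mem_NB.1 hgnb with h | h
      · have hgx' : g ≠ x := by simpa using hgx
        exact hgx' h
      · exact hind x hxF g hgF h
    · intro i hi j hj
      exact hind i (Finset.mem_sdiff.1 hi).1 j (Finset.mem_sdiff.1 hj).1
  · rintro ⟨hGS, hind⟩
    have hxG : x ∉ G := fun h => (Finset.mem_sdiff.1 (hGS h)).2 (mem_NB.2 (Or.inl rfl))
    refine ⟨insert x G, ⟨?_, ?_⟩, Finset.mem_insert_self _ _, ?_⟩
    · exact Finset.insert_subset hx (fun g hg => (Finset.mem_sdiff.1 (hGS hg)).1)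
    · exact insert_indep hind
        (fun u hu hadj => (Finset.mem_sdiff.1 (hGS hu)).2 (mem_NB.2 (Or.inr hadj.symm)))
    · rw [Finset.sdiff_singleton_eq_erase, Finset.erase_insert hxG]

lemma KK_insert_eq_cone {A : Finset (Fin n)} {w : Fin n} (hw : w ∉ A)
    (hadj : ∀ v ∈ A, ¬ (cycleGraph n).Adj w v) :
    KK n (insert w A) = cone w (KK n A) := by
  ext F
  simp only [KK, cone, Set.mem_setOf_eq]
  constructor
  · rintro ⟨hFS, hind⟩
    refine ⟨?_, ?_⟩
    · intro g hg
      obtain ⟨hgF, hgw⟩ := Finset.mem_sdiff.1 hg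
      rcases Finset.mem_insert.1 (hFS hgF) with h | h
      · exact absurd h (by simpa using hgw)
      · exact h
    · intro i hi j hj
      exact hind i (Finset.mem_sdiff.1 hi).1 j (Finset.mem_sdiff.1 hj).1
  · rintro ⟨hFS, hind⟩
    constructor
    · intro g hg
      rcases eq_or_ne g w with rfl | hgw
      · exact Finset.mem_insert_self _ _
      · exact Finset.mem_insert_of_mem (hFS (Finset.mem_sdiff.2 ⟨hg, by simpa using hgw⟩))
    · have hFi : F ⊆ insert w (F \ {w}) := by
        intro a ha
        rcases eq_or_ne a w with rfl | haw
        · exact Finset.mem_insert_self _ _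
        · exact Finset.mem_insert_of_mem (Finset.mem_sdiff.2 ⟨ha, by simpa using haw⟩)
      intro i hi j hj
      refine insert_indep (F := F \ {w}) hind ?_ i (hFi hi) j (hFi hj)
      · intro u hu hadj2
        exact hadj u (hFS hu) hadj2.symm

lemma exists_small_facet_arc (hn : 3 ≤ n) {a m : ℕ} (h1 : 1 ≤ a) (h2 : a + m ≤ n) :
    ∃ T, IsFacet (KK n (arc n a m)) T ∧ T.card ≤ (m + 2) / 3 := by
  haveI : NeZero n := ⟨by omega⟩
  by_cases hm : m % 3 = 1
  · -- T = {a} ∪ {a + 3i + 2 : i < (m-1)/3}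
    refine ⟨insert ((a : ℕ) : Fin n)
      ((Finset.range ((m - 1) / 3)).image (fun i => ((a + 3*i + 2 : ℕ) : Fin n))), ?_, ?_⟩
    swap
    · calc _ ≤ _ + 1 := Finset.card_insert_le _ _
        _ ≤ (m-1)/3 + 1 := by
            have := Finset.card_image_le (f := fun i => ((a + 3*i + 2 : ℕ) : Fin n))
              (s := Finset.range ((m - 1) / 3))
            rw [Finset.card_range] at this
            omega
        _ ≤ (m+2)/3 := by omega
    have hvala : ((a : ℕ) : Fin n).val = a := Fin.val_cast_of_lt (by omega)
    have hmemT : ∀ w ∈ insert ((a : ℕ) : Fin n)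
        ((Finset.range ((m - 1) / 3)).image (fun i => ((a + 3*i + 2 : ℕ) : Fin n))),
        ∃ t, w.val = a + t ∧ t < m ∧ (t = 0 ∨ t % 3 = 2) := by
      intro w hw
      rcases Finset.mem_insert.1 hw with rfl | hw
      · exact ⟨0, by omega, by omega, Or.inl rfl⟩
      · obtain ⟨i, hi, rfl⟩ := Finset.mem_image.1 hw
        have hi' := Finset.mem_range.1 hi
        have h3 : 3*i + 2 < m := by omega
        exact ⟨3*i + 2, by rw [Fin.val_cast_of_lt (by omega)]; omega, h3, Or.inr (by omega)⟩
    have hTK : insert ((a : ℕ) : Fin n)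
        ((Finset.range ((m - 1) / 3)).image (fun i => ((a + 3*i + 2 : ℕ) : Fin n)))
        ∈ KK n (arc n a m) := by
      constructor
      · intro w hw
        obtain ⟨t, ht, htm, _⟩ := hmemT w hw
        rw [mem_arc, ht]; omega
      · intro i hi j hj hadj
        obtain ⟨t, ht, htm, htp⟩ := hmemT i hi
        obtain ⟨s, hs, hsm, hsp⟩ := hmemT j hj
        rcases (adj_iff hn).1 hadj with hc | hc | ⟨hc, hc'⟩ | ⟨hc, hc'⟩ <;> omega
    refine facet_of_cover hTK ?_
    intro v hv
    rw [mem_arc] at hv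
    rw [Finset.mem_biUnion]
    rcases Nat.eq_or_lt_of_le hv.1 with he | hlt
    · refine ⟨((a : ℕ) : Fin n), Finset.mem_insert_self _ _, mem_NB.2 (Or.inl ?_)⟩
      apply Fin.ext; rw [hvala]; omega
    · set i := (v.val - a - 1) / 3 with hi
      have hiu : i < (m - 1) / 3 := by omega
      have h3 : 3*i + 2 < m := by omega
      have hu : ((a + 3*i + 2 : ℕ) : Fin n).val = a + 3*i + 2 := Fin.val_cast_of_lt (by omega)
      refine ⟨((a + 3*i + 2 : ℕ) : Fin n),
        Finset.mem_insert_of_mem (Finset.mem_image.2 ⟨i, Finset.mem_range.2 hiu, rfl⟩),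
        mem_NB.2 ?_⟩
      have hdiff : v.val = a + 3*i + 1 ∨ v.val = a + 3*i + 2 ∨ v.val = a + 3*i + 3 := by omega
      rcases hdiff with h | h | h
      · exact Or.inr ((adj_iff hn).2 (Or.inr (Or.inl (by omega))))
      · exact Or.inl (Fin.ext (by omega))
      · exact Or.inr ((adj_iff hn).2 (Or.inl (by omega)))
  · -- T = {a + 3i + 1 : i < (m+2)/3}
    refine ⟨(Finset.range ((m + 2) / 3)).image (fun i => ((a + 3*i + 1 : ℕ) : Fin n)), ?_, ?_⟩
    swap
    · have := Finset.card_image_le (f := fun i => ((a + 3*i + 1 : ℕ) : Fin n))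
        (s := Finset.range ((m + 2) / 3))
      rw [Finset.card_range] at this
      omega
    have hmemT : ∀ w ∈ (Finset.range ((m + 2) / 3)).image
        (fun i => ((a + 3*i + 1 : ℕ) : Fin n)),
        ∃ t, w.val = a + t ∧ t < m ∧ t % 3 = 1 := by
      intro w hw
      obtain ⟨i, hi, rfl⟩ := Finset.mem_image.1 hw
      have hi' := Finset.mem_range.1 hi
      have h3 : 3*i + 1 < m := by omega
      exact ⟨3*i + 1, by rw [Fin.val_cast_of_lt (by omega)]; omega, h3, by omega⟩
    have hTK : (Finset.range ((m + 2) / 3)).image (fun i => ((a + 3*i + 1 : ℕ) : Fin n))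
        ∈ KK n (arc n a m) := by
      constructor
      · intro w hw
        obtain ⟨t, ht, htm, _⟩ := hmemT w hw
        rw [mem_arc, ht]; omega
      · intro i hi j hj hadj
        obtain ⟨t, ht, htm, htp⟩ := hmemT i hi
        obtain ⟨s, hs, hsm, hsp⟩ := hmemT j hj
        rcases (adj_iff hn).1 hadj with hc | hc | ⟨hc, hc'⟩ | ⟨hc, hc'⟩ <;> omega
    refine facet_of_cover hTK ?_
    intro v hv
    rw [mem_arc] at hv
    rw [Finset.mem_biUnion]
    set i := (v.val - a) / 3 with hi
    have hiu : i < (m + 2) / 3 := by omega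
    have h3 : 3*i + 1 < m := by omega
    have hu : ((a + 3*i + 1 : ℕ) : Fin n).val = a + 3*i + 1 := Fin.val_cast_of_lt (by omega)
    refine ⟨((a + 3*i + 1 : ℕ) : Fin n),
      Finset.mem_image.2 ⟨i, Finset.mem_range.2 hiu, rfl⟩, mem_NB.2 ?_⟩
    have hdiff : v.val = a + 3*i ∨ v.val = a + 3*i + 1 ∨ v.val = a + 3*i + 2 := by omega
    rcases hdiff with h | h | h
    · exact Or.inr ((adj_iff hn).2 (Or.inr (Or.inl (by omega))))
    · exact Or.inl (Fin.ext (by omega))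
    · exact Or.inr ((adj_iff hn).2 (Or.inl (by omega)))

lemma exists_small_facet_cyc (hn : 3 ≤ n) (hmod : n % 3 = 0 ∨ n % 3 = 2) :
    ∃ T, IsFacet (KK n Finset.univ) T ∧ T.card ≤ (n + 1) / 3 := by
  haveI : NeZero n := ⟨by omega⟩
  refine ⟨(Finset.range ((n + 1) / 3)).image (fun i => ((3*i + 1 : ℕ) : Fin n)), ?_, ?_⟩
  swap
  · have := Finset.card_image_le (f := fun i => ((3*i + 1 : ℕ) : Fin n))
      (s := Finset.range ((n + 1) / 3))
    rw [Finset.card_range] at this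
    omega
  have hmemT : ∀ w ∈ (Finset.range ((n + 1) / 3)).image (fun i => ((3*i + 1 : ℕ) : Fin n)),
      ∃ t, w.val = t ∧ t < n ∧ t % 3 = 1 := by
    intro w hw
    obtain ⟨i, hi, rfl⟩ := Finset.mem_image.1 hw
    have hi' := Finset.mem_range.1 hi
    have h3 : 3*i + 1 < n := by omega
    exact ⟨3*i + 1, by rw [Fin.val_cast_of_lt (by omega)], h3, by omega⟩
  have hTK : (Finset.range ((n + 1) / 3)).image (fun i => ((3*i + 1 : ℕ) : Fin n))
      ∈ KK n (Finset.univ : Finset (Fin n)) := by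
    constructor
    · exact Finset.subset_univ _
    · intro i hi j hj hadj
      obtain ⟨t, ht, htm, htp⟩ := hmemT i hi
      obtain ⟨s, hs, hsm, hsp⟩ := hmemT j hj
      rcases (adj_iff hn).1 hadj with hc | hc | ⟨hc, hc'⟩ | ⟨hc, hc'⟩ <;> omega
  refine facet_of_cover hTK ?_
  intro v _
  rw [Finset.mem_biUnion]
  have hvlt := v.isLt
  set i := v.val / 3 with hi
  have hiu : i < (n + 1) / 3 := by omega
  have h3 : 3*i + 1 < n := by omega
  have hu : ((3*i + 1 : ℕ) : Fin n).val = 3*i + 1 := Fin.val_cast_of_lt (by omega)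
  refine ⟨((3*i + 1 : ℕ) : Fin n),
    Finset.mem_image.2 ⟨i, Finset.mem_range.2 hiu, rfl⟩, mem_NB.2 ?_⟩
  have hdiff : v.val = 3*i ∨ v.val = 3*i + 1 ∨ v.val = 3*i + 2 := by omega
  rcases hdiff with h | h | h
  · exact Or.inr ((adj_iff hn).2 (Or.inr (Or.inl (by omega))))
  · exact Or.inl (Fin.ext (by omega))
  · exact Or.inr ((adj_iff hn).2 (Or.inl (by omega)))


lemma KK_simplex_of_no_adj {S : Finset (Fin n)}
    (h : ∀ i ∈ S, ∀ j ∈ S, ¬ (cycleGraph n).Adj i j) : IsSimplexSet (KK n S) :=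
  ⟨S, by
    ext F
    simp only [KK, Set.mem_setOf_eq]
    exact ⟨fun hf => hf.1, fun hf => ⟨hf, fun i hi j hj => h i (hf hi) j (hf hj)⟩⟩⟩

lemma path_vd (hn : 3 ≤ n) : ∀ m a : ℕ, 1 ≤ a → (m = 0 ∨ a + m ≤ n) →
    VertexDismissible (KK n (arc n a m)) := by
  haveI : NeZero n := ⟨by omega⟩
  intro m
  induction m using Nat.strong_induction_on with
  | _ m ih =>
  intro a ha hm
  rcases le_or_gt m 1 with hm1 | hm2
  · refine .simplex (KK_simplex_of_no_adj ?_)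
    intro i hi j hj hadj
    rw [mem_arc] at hi hj
    rcases (adj_iff hn).1 hadj with hc | hc | ⟨hc, hc'⟩ | ⟨hc, hc'⟩ <;> omega
  · -- m ≥ 2
    have ham : a + m ≤ n := by rcases hm with h | h; omega; exact h
    have hx : ((a + 1 : ℕ) : Fin n).val = a + 1 := Fin.val_cast_of_lt (by omega)
    have hvala : ((a : ℕ) : Fin n).val = a := Fin.val_cast_of_lt (by omega)
    have haw : ((a : ℕ) : Fin n) ∉ arc n (a+2) (m-2) := by
      rw [mem_arc, hvala]; omega
    have hanadj : ∀ v ∈ arc n (a+2) (m-2), ¬ (cycleGraph n).Adj ((a : ℕ) : Fin n) v := by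
      intro v hv hadj
      rw [mem_arc] at hv
      rcases (adj_iff hn).1 hadj with hc | hc | ⟨hc, hc'⟩ | ⟨hc, hc'⟩ <;>
        rw [hvala] at * <;> omega
    have hEdel : del (KK n (arc n a m)) ((a + 1 : ℕ) : Fin n)
        = cone ((a : ℕ) : Fin n) (KK n (arc n (a+2) (m-2))) := by
      have harc : (arc n a m).erase ((a + 1 : ℕ) : Fin n)
          = insert ((a : ℕ) : Fin n) (arc n (a+2) (m-2)) := by
        ext v
        rw [Finset.mem_erase, mem_arc, Finset.mem_insert, mem_arc, Ne, Fin.ext_iff,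
          Fin.ext_iff, hx, hvala]
        omega
      rw [del_KK, harc, KK_insert_eq_cone haw hanadj]
    have hvcone : ∀ G ∈ KK n (arc n (a+2) (m-2)), ((a : ℕ) : Fin n) ∉ G :=
      fun G hG h => haw (hG.1 h)
    refine .dismiss ((a + 1 : ℕ) : Fin n) ?_ ?_ ?_
    · -- dismissing
      refine isDismissing_of (k := m / 3 + 1) ?_ ?_ ?_
      · obtain ⟨T, hT, hTc⟩ := exists_small_facet_arc hn ha ham
        exact ⟨T, hT, by omega⟩
      · rw [hEdel]
        obtain ⟨F', hF'⟩ := exists_facet (Δ := KK n (arc n (a+2) (m-2))) ⟨∅, empty_mem_KK⟩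
        exact ⟨insert ((a : ℕ) : Fin n) F', (facet_cone_iff hvcone _).2 ⟨F', hF', rfl⟩⟩
      · rw [hEdel]
        intro F hF
        obtain ⟨F', hF', rfl⟩ := (facet_cone_iff hvcone _).1 hF
        have hcard : (arc n (a+2) (m-2)).card ≤ 3 * F'.card := facet_card_lb hn hF'
        rw [card_arc (by omega)] at hcard
        rw [Finset.card_insert_of_notMem (fun h => haw (hF'.1.1 h))]
        omega
    · rw [hEdel]
      exact cone_vd (ih (m-2) (by omega) (a+2) (by omega) (by omega)) _ hvcone
    · have hElink : link (KK n (arc n a m)) ((a + 1 : ℕ) : Fin n)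
          = KK n (arc n (a+3) (m-3)) := by
        have harc : arc n a m \ NB n ((a + 1 : ℕ) : Fin n) = arc n (a+3) (m-3) := by
          ext v
          simp only [Finset.mem_sdiff, mem_arc, mem_NB, adj_iff hn, Fin.ext_iff, hx]
          omega
        rw [link_KK (by rw [mem_arc, hx]; omega), harc]
      rw [hElink]
      exact ih (m-3) (by omega) (a+3) (by omega) (by omega)

lemma main_vd (hn : 3 ≤ n) (hmod : n % 3 = 0 ∨ n % 3 = 2) :
    VertexDismissible (KK n (Finset.univ : Finset (Fin n))) := by
  haveI : NeZero n := ⟨by omega⟩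
  have hEdel : del (KK n (Finset.univ : Finset (Fin n))) 0 = KK n (arc n 1 (n-1)) := by
    have harc : (Finset.univ : Finset (Fin n)).erase 0 = arc n 1 (n-1) := by
      ext v
      have hvlt := v.isLt
      rw [Finset.mem_erase, mem_arc, Ne, Fin.ext_iff, Fin.val_zero]
      simp only [Finset.mem_univ, and_true]
      omega
    rw [del_KK, harc]
  refine .dismiss (0 : Fin n) ?_ ?_ ?_
  · refine isDismissing_of (k := (n+1)/3) ?_ ?_ ?_
    · obtain ⟨T, hT, hTc⟩ := exists_small_facet_cyc hn hmod
      exact ⟨T, hT, hTc⟩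
    · rw [hEdel]
      exact exists_facet ⟨∅, empty_mem_KK⟩
    · rw [hEdel]
      intro F hF
      have hcard := facet_card_lb hn hF
      rw [card_arc (by omega)] at hcard
      omega
  · rw [hEdel]
    exact path_vd hn (n-1) 1 (by omega) (by omega)
  · have hElink : link (KK n (Finset.univ : Finset (Fin n))) 0 = KK n (arc n 2 (n-3)) := by
      have harc : (Finset.univ : Finset (Fin n)) \ NB n 0 = arc n 2 (n-3) := by
        ext v
        have hvlt := v.isLt
        simp only [Finset.mem_sdiff, Finset.mem_univ, true_and, mem_arc, mem_NB,
          adj_iff hn, Fin.ext_iff, Fin.val_zero]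
        omega
      rw [link_KK (Finset.mem_univ 0), harc]
    rw [hElink]
    exact path_vd hn (n-3) 2 (by omega) (by omega)

end Cycle

/-- For `n ≥ 3` with `n ≡ 0` or `2 (mod 3)`, the independence complex of the
cycle graph `C_n` is vertex dismissible. -/
theorem cycle_independenceComplex_vertexDismissible (n : ℕ) (hn : 3 ≤ n)
    (hmod : n % 3 = 0 ∨ n % 3 = 2) :
    VertexDismissible
      {F : Finset (Fin n) | ∀ i ∈ F, ∀ j ∈ F, ¬ (SimpleGraph.cycleGraph n).Adj i j} := by
  have hset : {F : Finset (Fin n) | ∀ i ∈ F, ∀ j ∈ F, ¬ (SimpleGraph.cycleGraph n).Adj i j}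
      = KK n (Finset.univ : Finset (Fin n)) := by
    ext F
    simp only [KK, Set.mem_setOf_eq, Finset.subset_univ, true_and]
  rw [hset]
  exact main_vd hn hmod
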